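/- arXiv:1105.0029 — 2 statements merged into one kernel-verified Lean document; each statement's English description precedes it below -/
import Mathlib

section
/- A subset A of a Euclidean space is nearly convex if and only if the relative interior of the convex hull of A is contained in A. -/
/-! If `C ⊆ A ⊆ closure C` with `C` convex, then also `C ⊆ convexHull A ⊆ closure C`, and a convex
set shares its relative interior with every set squeezed between it and its closure; hence
`ri (convexHull A) = ri C ⊆ A`. Conversely `ri (convexHull A)` is convex and dense in
`convexHull A`, so it witnesses that `A` is nearly convex. Identifying the affine span with its
direction turns relative interiors into interiors, where both facts about convex sets are
classical. -/

variable {X : Type*} [NormedAddCommGroup X] [InnerProductSpace ℝ X] [FiniteDimensional ℝ X]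

def NearlyEqual (A B : Set X) : Prop :=
  closure A = closure B ∧ intrinsicInterior ℝ A = intrinsicInterior ℝ B

def NearlyConvex (A : Set X) : Prop :=
  ∃ C : Set X, Convex ℝ C ∧ C ⊆ A ∧ A ⊆ closure C

open Set

section NormedSpace

variable {V : Type*} [NormedAddCommGroup V] [NormedSpace ℝ V] {s : Set V}

namespace AffineSubspace

noncomputable def directionParam (S : AffineSubspace ℝ V) (p : S) : S.direction →ᵃⁱ[ℝ] V :=
  have : Nonempty S := ⟨p⟩
  S.subtypeₐᵢ.comp (AffineIsometryEquiv.constVSub ℝ p).symm.toAffineIsometry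

theorem range_directionParam (S : AffineSubspace ℝ V) (p : S) :
    range (S.directionParam p) = S := by
  have : Nonempty S := ⟨p⟩
  change range (S.subtypeₐᵢ ∘ (AffineIsometryEquiv.constVSub ℝ p).symm) = S
  rw [range_comp, (AffineIsometryEquiv.constVSub ℝ p).symm.surjective.range_eq, image_univ,
    coe_subtypeₐᵢ, coe_subtype, Subtype.range_coe]

theorem image_preimage_directionParam {S : AffineSubspace ℝ V} (p : S) (hs : s ⊆ S) :
    S.directionParam p '' (S.directionParam p ⁻¹' s) = s :=
  image_preimage_eq_of_subset (by rwa [range_directionParam])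

end AffineSubspace

theorem intrinsicInterior_eq_image_interior_preimage {S : AffineSubspace ℝ V}
    (hS : affineSpan ℝ s = S) (p : S) :
    intrinsicInterior ℝ s = S.directionParam p '' interior (S.directionParam p ⁻¹' s) := by
  subst hS
  have : Nonempty (affineSpan ℝ s) := ⟨p⟩
  set e := (AffineIsometryEquiv.constVSub ℝ p).symm.toHomeomorph
  change _ = (Subtype.val ∘ e) '' interior (e ⁻¹' ((↑) ⁻¹' s))
  rw [← e.preimage_interior, image_comp, e.image_preimage]
  rfl

protected theorem Convex.intrinsicInterior (hs : Convex ℝ s) :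
    Convex ℝ (intrinsicInterior ℝ s) := by
  rcases s.eq_empty_or_nonempty with rfl | ⟨x, hx⟩
  · simpa using convex_empty
  set S := affineSpan ℝ s
  set ψ := S.directionParam ⟨x, subset_affineSpan ℝ s hx⟩
  rw [intrinsicInterior_eq_image_interior_preimage rfl ⟨x, subset_affineSpan ℝ s hx⟩]
  exact (hs.affine_preimage ψ.toAffineMap).interior.affine_image ψ.toAffineMap

end NormedSpace

section FiniteDimensional

variable {V : Type*} [NormedAddCommGroup V] [NormedSpace ℝ V] [FiniteDimensional ℝ V]
  {s t : Set V}

theorem Convex.interior_preimage_directionParam_nonempty (hs : Convex ℝ s) (hne : s.Nonempty)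
    {S : AffineSubspace ℝ V} (hS : affineSpan ℝ s = S) (p : S) :
    (interior (S.directionParam p ⁻¹' s)).Nonempty := by
  have := hne.intrinsicInterior hs
  rwa [intrinsicInterior_eq_image_interior_preimage hS p, image_nonempty] at this

theorem Convex.closure_intrinsicInterior (hs : Convex ℝ s) :
    closure (intrinsicInterior ℝ s) = closure s := by
  refine (closure_mono intrinsicInterior_subset).antisymm ?_
  rcases s.eq_empty_or_nonempty with rfl | ⟨x, hx⟩
  · simp
  set S := affineSpan ℝ s
  set p : S := ⟨x, subset_affineSpan ℝ s hx⟩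
  set ψ := S.directionParam p
  have hint := hs.interior_preimage_directionParam_nonempty ⟨x, hx⟩ rfl p
  have ht : Convex ℝ (ψ ⁻¹' s) := hs.affine_preimage ψ.toAffineMap
  calc closure s = closure (ψ '' (ψ ⁻¹' s)) := by
        rw [AffineSubspace.image_preimage_directionParam p (subset_affineSpan ℝ s)]
    _ ⊆ closure (ψ '' closure (interior (ψ ⁻¹' s))) := by
        rw [ht.closure_interior_eq_closure_of_nonempty_interior hint]
        exact closure_mono (image_mono subset_closure)
    _ ⊆ closure (intrinsicInterior ℝ s) := by
        rw [intrinsicInterior_eq_image_interior_preimage rfl p]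
        exact closure_minimal (image_closure_subset_closure_image ψ.continuous) isClosed_closure

theorem Convex.intrinsicInterior_eq_of_subset_closure (hs : Convex ℝ s) (hst : s ⊆ t)
    (hts : t ⊆ closure s) : intrinsicInterior ℝ t = intrinsicInterior ℝ s := by
  rcases s.eq_empty_or_nonempty with rfl | ⟨x, hx⟩
  · rw [closure_empty, subset_empty_iff] at hts
    rw [hts]
  set S := affineSpan ℝ s
  have hspan : affineSpan ℝ t = S := by
    refine le_antisymm ?_ (affineSpan_mono ℝ hst)
    exact affineSpan_le.mpr (hts.trans (closure_minimal (subset_affineSpan ℝ s)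
      S.closed_of_finiteDimensional))
  set p : S := ⟨x, subset_affineSpan ℝ s hx⟩
  set ψ := S.directionParam p
  rw [intrinsicInterior_eq_image_interior_preimage hspan p,
    intrinsicInterior_eq_image_interior_preimage rfl p]
  have hint := hs.interior_preimage_directionParam_nonempty ⟨x, hx⟩ rfl p
  have hs' : Convex ℝ (ψ ⁻¹' s) := hs.affine_preimage ψ.toAffineMap
  have hts' : ψ ⁻¹' t ⊆ closure (ψ ⁻¹' s) := by
    rw [ψ.isometry.isEmbedding.closure_eq_preimage_closure_image,
      AffineSubspace.image_preimage_directionParam p (subset_affineSpan ℝ s)]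
    exact preimage_mono hts
  congr 1
  refine (interior_mono hts').trans ?_ |>.antisymm (interior_mono (preimage_mono hst))
  rw [hs'.interior_closure_eq_interior_of_nonempty_interior hint]

end FiniteDimensional

theorem nearlyConvex_iff_relint_convexHull_subset (A : Set X) :
    NearlyConvex A ↔ intrinsicInterior ℝ (convexHull ℝ A) ⊆ A := by
  constructor
  · rintro ⟨C, hC, hCA, hAC⟩
    have hri : intrinsicInterior ℝ (convexHull ℝ A) = intrinsicInterior ℝ C :=
      hC.intrinsicInterior_eq_of_subset_closure (hCA.trans (subset_convexHull ℝ A))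
        (convexHull_min hAC hC.closure)
    exact hri ▸ intrinsicInterior_subset.trans hCA
  · intro h
    refine ⟨_, (convex_convexHull ℝ A).intrinsicInterior, h, ?_⟩
    rw [(convex_convexHull ℝ A).closure_intrinsicInterior]
    exact (subset_convexHull ℝ A).trans subset_closure
end

section
/- Let A and B be nearly convex subsets of a Euclidean space and λ, μ real numbers. Then λ·A + μ·B is nearly convex and the relative interior of λ·A + μ·B equals λ·(relative interior of A) + μ·(relative interior of B). -/
open Pointwise

variable {X : Type*} [NormedAddCommGroup X] [InnerProductSpace ℝ X] [FiniteDimensional ℝ X]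

lemma mem_ri {s : Set X} {x : X} :
    x ∈ intrinsicInterior ℝ s ↔ x ∈ s ∧ x ∈ affineSpan ℝ s ∧
      ∃ ε > 0, ∀ y ∈ affineSpan ℝ s, dist y x < ε → y ∈ s := by
  constructor
  · rintro h
    obtain ⟨z, hz, rfl⟩ := mem_intrinsicInterior.1 h
    rw [mem_interior_iff_mem_nhds, Metric.mem_nhds_iff] at hz
    obtain ⟨ε, hε, hball⟩ := hz
    refine ⟨?_, z.2, ε, hε, fun y hy hdy => ?_⟩
    · have := hball (Metric.mem_ball_self hε); exact this
    · have : (⟨y, hy⟩ : affineSpan ℝ s) ∈ Metric.ball z ε := by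
        rw [Metric.mem_ball, Subtype.dist_eq]; exact hdy
      exact hball this
  · rintro ⟨hxs, hxspan, ε, hε, h⟩
    refine mem_intrinsicInterior.2 ⟨⟨x, hxspan⟩, ?_, rfl⟩
    rw [mem_interior_iff_mem_nhds, Metric.mem_nhds_iff]
    exact ⟨ε, hε, fun z hz => h z z.2 (by rwa [Metric.mem_ball, Subtype.dist_eq] at hz)⟩

lemma ri_combo {C : Set X} (hC : Convex ℝ C) {x y : X} (hx : x ∈ intrinsicInterior ℝ C)
    (hy : y ∈ closure C) {t : ℝ} (ht0 : 0 < t) (ht1 : t ≤ 1) :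
    t • x + (1 - t) • y ∈ intrinsicInterior ℝ C := by
  obtain ⟨hxC, hxspan, ε, hε, hb⟩ := mem_ri.1 hx
  have ht : t ≠ 0 := ne_of_gt ht0
  have hyspan : y ∈ affineSpan ℝ C := by
    have hcl : IsClosed ((affineSpan ℝ C : Set X)) := (affineSpan ℝ C).closed_of_finiteDimensional
    exact hcl.closure_subset_iff.2 (subset_affineSpan ℝ C) hy
  set p := t • x + (1 - t) • y with hp
  have hpspan : p ∈ affineSpan ℝ C := by
    have := AffineSubspace.smul_vsub_vadd_mem (affineSpan ℝ C) t hxspan hyspan hyspan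
    convert this using 1
    simp [vsub_eq_sub, vadd_eq_add]
    module
  have claim : ∀ w ∈ affineSpan ℝ C, dist w p < t * ε / 4 → w ∈ C := by
    intro w hwspan hdw
    obtain ⟨y', hyy', hy'C⟩ : ∃ y' , dist y y' < t * ε / 4 ∧ y' ∈ C := by
      have := Metric.mem_closure_iff.1 hy (t * ε / 4) (by positivity)
      obtain ⟨y', hy', hd⟩ := this
      exact ⟨y', hd, hy'⟩
    set x' := t⁻¹ • (w - (1 - t) • y') with hx'
    have hx'span : x' ∈ affineSpan ℝ C := by
      have := AffineSubspace.smul_vsub_vadd_mem (affineSpan ℝ C) t⁻¹ hwspan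
        (subset_affineSpan ℝ C hy'C) (subset_affineSpan ℝ C hy'C)
      convert this using 1
      simp [vsub_eq_sub, vadd_eq_add, hx']
      match_scalars <;> field_simp <;> ring
    have hdiff : x' - x = t⁻¹ • ((w - p) + (1 - t) • (y - y')) := by
      simp only [hx', hp]
      match_scalars <;> field_simp <;> ring
    have hnorm : dist x' x < ε := by
      rw [dist_eq_norm, hdiff]
      have h1 : ‖(w - p) + (1 - t) • (y - y')‖ ≤ ‖w - p‖ + (1 - t) * ‖y - y'‖ := by
        calc ‖(w - p) + (1 - t) • (y - y')‖ ≤ ‖w - p‖ + ‖(1 - t) • (y - y')‖ := norm_add_le _ _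
        _ = ‖w - p‖ + |1 - t| * ‖y - y'‖ := by rw [norm_smul, Real.norm_eq_abs]
        _ = ‖w - p‖ + (1 - t) * ‖y - y'‖ := by rw [abs_of_nonneg (by linarith)]
      have h2 : ‖w - p‖ < t * ε / 4 := by rwa [← dist_eq_norm]
      have h3 : ‖y - y'‖ < t * ε / 4 := by rw [← dist_eq_norm]; exact hyy'
      have h4 : (1 - t) * ‖y - y'‖ ≤ ‖y - y'‖ := by
        nlinarith [norm_nonneg (y - y')]
      rw [norm_smul, Real.norm_eq_abs, abs_of_pos (by positivity : (0:ℝ) < t⁻¹)]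
      have : t⁻¹ * (t * ε / 4 + t * ε / 4) < ε := by
        rw [show t⁻¹ * (t * ε / 4 + t * ε / 4) = (t⁻¹ * t) * (ε/2) by ring, inv_mul_cancel₀ ht]
        linarith
      nlinarith [norm_nonneg ((w - p) + (1 - t) • (y - y')), inv_pos.2 ht0]
    have hx'C : x' ∈ C := hb x' hx'span hnorm
    have : w = t • x' + (1 - t) • y' := by
      simp only [hx']
      match_scalars <;> field_simp <;> ring
    rw [this]
    exact hC hx'C hy'C (le_of_lt ht0) (by linarith) (by ring)
  refine mem_ri.2 ⟨?_, hpspan, t * ε / 4, by positivity, claim⟩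
  exact claim p hpspan (by simp [dist_self]; positivity)

lemma span_sandwich {C A : Set X} (hCA : C ⊆ A) (hAC : A ⊆ closure C) :
    affineSpan ℝ A = affineSpan ℝ C := by
  apply le_antisymm
  · apply affineSpan_le.2
    have hcl : IsClosed ((affineSpan ℝ C : Set X)) := (affineSpan ℝ C).closed_of_finiteDimensional
    exact hAC.trans (hcl.closure_subset_iff.2 (subset_affineSpan ℝ C))
  · exact affineSpan_mono ℝ hCA

/-- extension criterion: from a relative interior point x, segments from any span point can be
extended slightly beyond x while staying in the closure-ball condition set. -/
lemma crit_of_ri {C : Set X} {x y : X} (hx : x ∈ intrinsicInterior ℝ C) (hy : y ∈ C) :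
    ∃ μ : ℝ, 1 < μ ∧ y + μ • (x - y) ∈ C := by
  obtain ⟨hxC, hxspan, ε, hε, hb⟩ := mem_ri.1 hx
  set μ : ℝ := 1 + ε / (2 * (‖x - y‖ + 1)) with hμ
  have hden : (0:ℝ) < ‖x - y‖ + 1 := by positivity
  have hμ1 : 1 < μ := by
    have : 0 < ε / (2 * (‖x - y‖ + 1)) := by positivity
    simp [hμ]; linarith
  refine ⟨μ, hμ1, ?_⟩
  have hspan : y + μ • (x - y) ∈ affineSpan ℝ C := by
    have := AffineSubspace.smul_vsub_vadd_mem (affineSpan ℝ C) μ hxspan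
      (subset_affineSpan ℝ C hy) (subset_affineSpan ℝ C hy)
    convert this using 1
    simp [vsub_eq_sub, vadd_eq_add]; abel
  apply hb _ hspan
  have : y + μ • (x - y) - x = (μ - 1) • (x - y) := by match_scalars <;> ring
  rw [dist_eq_norm, this, norm_smul, Real.norm_eq_abs,
    abs_of_pos (by linarith : (0:ℝ) < μ - 1)]
  have hμ2 : μ - 1 = ε / (2 * (‖x - y‖ + 1)) := by simp [hμ]
  rw [hμ2]
  rw [div_mul_eq_mul_div]
  rw [div_lt_iff₀ (by positivity)]
  nlinarith [norm_nonneg (x - y)]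

lemma ri_of_crit {C : Set X} (hC : Convex ℝ C) {x z : X} (hz : z ∈ intrinsicInterior ℝ C)
    {μ : ℝ} (hμ : 1 < μ) (hw : z + μ • (x - z) ∈ closure C) : x ∈ intrinsicInterior ℝ C := by
  have hμ0 : (0:ℝ) < μ := by linarith
  have ht0 : (0:ℝ) < 1 - 1/μ := by
    have : 1/μ < 1 := by rw [div_lt_one hμ0]; exact hμ
    linarith
  have ht1 : (1:ℝ) - 1/μ ≤ 1 := by
    have : 0 < 1/μ := by positivity
    linarith
  have h := ri_combo hC hz hw ht0 ht1
  have : (1 - 1/μ) • z + (1 - (1 - 1/μ)) • (z + μ • (x - z)) = x := by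
    match_scalars <;> field_simp <;> ring
  rwa [this] at h

lemma ri_sandwich {C A : Set X} (hC : Convex ℝ C) (hCA : C ⊆ A) (hAC : A ⊆ closure C) :
    intrinsicInterior ℝ A = intrinsicInterior ℝ C := by
  rcases C.eq_empty_or_nonempty with rfl | hCne
  · have : A = ∅ := by simpa [closure_empty] using hAC
    rw [this]
  have hspan := span_sandwich hCA hAC
  apply Set.Subset.antisymm
  · intro x hx
    obtain ⟨hxA, hxspan, ε, hε, hb⟩ := mem_ri.1 hx
    obtain ⟨z, hz⟩ := (intrinsicInterior_nonempty hC).2 hCne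
    have hzC : z ∈ C := intrinsicInterior_subset hz
    set μ : ℝ := 1 + ε / (2 * (‖x - z‖ + 1)) with hμdef
    have hden : (0:ℝ) < ‖x - z‖ + 1 := by positivity
    have hμ1 : 1 < μ := by
      have : 0 < ε / (2 * (‖x - z‖ + 1)) := by positivity
      simp [hμdef]; linarith
    have hqspan : z + μ • (x - z) ∈ affineSpan ℝ A := by
      have hzspanA : z ∈ affineSpan ℝ A := hspan ▸ subset_affineSpan ℝ C hzC
      have := AffineSubspace.smul_vsub_vadd_mem (affineSpan ℝ A) μ hxspan hzspanA hzspanA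
      convert this using 1
      simp [vsub_eq_sub, vadd_eq_add]; abel
    have hqdist : dist (z + μ • (x - z)) x < ε := by
      have : z + μ • (x - z) - x = (μ - 1) • (x - z) := by match_scalars <;> ring
      rw [dist_eq_norm, this, norm_smul, Real.norm_eq_abs,
        abs_of_pos (by linarith : (0:ℝ) < μ - 1)]
      have hμ2 : μ - 1 = ε / (2 * (‖x - z‖ + 1)) := by simp [hμdef]
      rw [hμ2, div_mul_eq_mul_div, div_lt_iff₀ (by positivity)]
      nlinarith [norm_nonneg (x - z)]
    have hqA : z + μ • (x - z) ∈ A := hb _ hqspan hqdist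
    exact ri_of_crit hC hz hμ1 (hAC hqA)
  · intro x hx
    obtain ⟨hxC, hxspan, ε, hε, hb⟩ := mem_ri.1 hx
    refine mem_ri.2 ⟨hCA hxC, hspan ▸ hxspan, ε, hε, fun y hy hd => hCA (hb y (hspan ▸ hy) hd)⟩

lemma closure_ri {C : Set X} (hC : Convex ℝ C) :
    closure (intrinsicInterior ℝ C) = closure C := by
  rcases C.eq_empty_or_nonempty with rfl | hCne
  · simp
  apply Set.Subset.antisymm (closure_mono intrinsicInterior_subset)
  apply closure_minimal _ isClosed_closure
  intro x hxC
  obtain ⟨z, hz⟩ := (intrinsicInterior_nonempty hC).2 hCne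
  rw [Metric.mem_closure_iff]
  intro δ hδ
  set t : ℝ := min 1 (δ / (2 * (‖z - x‖ + 1))) with htdef
  have ht0 : 0 < t := lt_min one_pos (by positivity)
  have ht1 : t ≤ 1 := min_le_left _ _
  refine ⟨t • z + (1 - t) • x, ri_combo hC hz (subset_closure hxC) ht0 ht1, ?_⟩
  have : x - (t • z + (1 - t) • x) = t • (x - z) := by match_scalars <;> ring
  rw [dist_eq_norm, this, norm_smul, Real.norm_eq_abs, abs_of_pos ht0]
  have h1 : t ≤ δ / (2 * (‖z - x‖ + 1)) := min_le_right _ _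
  have h2 : ‖x - z‖ = ‖z - x‖ := norm_sub_rev _ _
  have hden : (0:ℝ) < ‖z - x‖ + 1 := by positivity
  calc t * ‖x - z‖ ≤ (δ / (2 * (‖z - x‖ + 1))) * ‖x - z‖ := by
        apply mul_le_mul_of_nonneg_right h1 (norm_nonneg _)
    _ < δ := by
        rw [h2, div_mul_eq_mul_div, div_lt_iff₀ (by positivity)]
        nlinarith [norm_nonneg (z - x)]

lemma ri_convex {C : Set X} (hC : Convex ℝ C) : Convex ℝ (intrinsicInterior ℝ C) := by
  intro x hx y hy a b ha hb hab
  rcases eq_or_lt_of_le ha with rfl | ha'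
  · simp only [zero_add] at hab
    simpa [hab] using hy
  · have hb' : b = 1 - a := by linarith
    rw [hb']
    exact ri_combo hC hx (subset_closure (intrinsicInterior_subset hy)) ha' (by linarith)

lemma ri_add {C D : Set X} (hC : Convex ℝ C) (hD : Convex ℝ D) :
    intrinsicInterior ℝ (C + D) = intrinsicInterior ℝ C + intrinsicInterior ℝ D := by
  rcases C.eq_empty_or_nonempty with rfl | hCne
  · simp
  rcases D.eq_empty_or_nonempty with rfl | hDne
  · simp
  have hCD : Convex ℝ (C + D) := hC.add hD
  have sub1 : intrinsicInterior ℝ C + intrinsicInterior ℝ D ⊆ intrinsicInterior ℝ (C + D) := by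
    rintro - ⟨x, hx, y, hy, rfl⟩
    obtain ⟨z, hz⟩ := (intrinsicInterior_nonempty hCD).2 (hCne.add hDne)
    obtain ⟨zc, hzc, zd, hzd, rfl⟩ := intrinsicInterior_subset hz
    obtain ⟨μ₁, hμ₁, hc1⟩ := crit_of_ri hx hzc
    obtain ⟨μ₂, hμ₂, hd1⟩ := crit_of_ri hy hzd
    set μ : ℝ := min μ₁ μ₂ with hμdef
    have hμ1 : 1 < μ := lt_min hμ₁ hμ₂
    have hext : ∀ (E : Set X), Convex ℝ E → ∀ (w u : X) (ν : ℝ), 1 < ν → μ ≤ ν → w ∈ E →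
        w + ν • (u - w) ∈ E → w + μ • (u - w) ∈ E := by
      intro E hE w u ν hν hμν hwE hwu
      have hν0 : (0:ℝ) < ν := by linarith
      have key : w + μ • (u - w) = (1 - μ/ν) • w + (μ/ν) • (w + ν • (u - w)) := by
        match_scalars <;> field_simp <;> ring
      rw [key]
      exact hE hwE hwu (by rw [sub_nonneg, div_le_one hν0]; linarith)
        (by positivity) (by ring)
    have hc : zc + μ • (x - zc) ∈ C := hext C hC zc x μ₁ hμ₁ (min_le_left _ _) hzc hc1
    have hd : zd + μ • (y - zd) ∈ D := hext D hD zd y μ₂ hμ₂ (min_le_right _ _) hzd hd1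
    have hsum : (zc + zd) + μ • ((x + y) - (zc + zd)) ∈ C + D := by
      have : (zc + zd) + μ • ((x + y) - (zc + zd)) =
          (zc + μ • (x - zc)) + (zd + μ • (y - zd)) := by match_scalars <;> ring
      rw [this]
      exact Set.add_mem_add hc hd
    exact ri_of_crit hCD hz hμ1 (subset_closure hsum)
  have hM : Convex ℝ (intrinsicInterior ℝ C + intrinsicInterior ℝ D) :=
    (ri_convex hC).add (ri_convex hD)
  have hMCD : intrinsicInterior ℝ C + intrinsicInterior ℝ D ⊆ C + D :=
    Set.add_subset_add intrinsicInterior_subset intrinsicInterior_subset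
  have hCDcl : C + D ⊆ closure (intrinsicInterior ℝ C + intrinsicInterior ℝ D) := by
    rintro - ⟨c, hc, d, hd, rfl⟩
    have hc' : c ∈ closure (intrinsicInterior ℝ C) := (closure_ri hC) ▸ subset_closure hc
    have hd' : d ∈ closure (intrinsicInterior ℝ D) := (closure_ri hD) ▸ subset_closure hd
    exact map_mem_closure₂ continuous_add hc' hd' (fun a ha b hb => Set.add_mem_add ha hb)
  have heq := ri_sandwich hM hMCD hCDcl
  exact Set.Subset.antisymm (heq ▸ intrinsicInterior_subset) sub1

lemma ri_smul {C : Set X} (hC : Convex ℝ C) (l : ℝ) :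
    intrinsicInterior ℝ (l • C) = l • intrinsicInterior ℝ C := by
  rcases eq_or_ne l 0 with rfl | hl
  · rcases C.eq_empty_or_nonempty with rfl | hCne
    · simp
    · rw [Set.zero_smul_set hCne,
        Set.zero_smul_set ((intrinsicInterior_nonempty hC).2 hCne), ← Set.singleton_zero,
        intrinsicInterior_singleton]
  · have habs : (0:ℝ) < |l| := abs_pos.2 hl
    set f : X →ᵃ[ℝ] X := (LinearMap.lsmul ℝ X l).toAffineMap with hf
    have hfC : f '' C = l • C := by
      ext y; simp [hf, Set.mem_smul_set]
    have key : ∀ y : X, y ∈ affineSpan ℝ (l • C) ↔ l⁻¹ • y ∈ affineSpan ℝ C := by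
      intro y
      rw [← hfC, ← AffineSubspace.map_span]
      constructor
      · rintro ⟨x, hx, hxy⟩
        have : x = l⁻¹ • y := by
          simp only [hf] at hxy
          simp at hxy
          rw [← hxy, inv_smul_smul₀ hl]
        exact this ▸ hx
      · intro h
        exact ⟨l⁻¹ • y, h, by simp [hf, smul_smul, mul_inv_cancel₀ hl, inv_mul_cancel₀ hl]⟩
    ext x
    constructor
    · intro hx
      obtain ⟨hxl, hxspan, ε, hε, hb⟩ := mem_ri.1 hx
      rw [Set.mem_smul_set_iff_inv_smul_mem₀ hl]
      refine mem_ri.2 ⟨(Set.mem_smul_set_iff_inv_smul_mem₀ hl _ _).1 hxl, (key x).1 hxspan,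
        ε / |l|, by positivity, fun y hy hd => ?_⟩
      have h1 : l • y ∈ affineSpan ℝ (l • C) := (key _).2 (by rwa [inv_smul_smul₀ hl])
      have h2 : dist (l • y) x < ε := by
        have : dist (l • y) x = |l| * dist y (l⁻¹ • x) := by
          conv_lhs => rw [← smul_inv_smul₀ hl x]
          rw [dist_smul₀, Real.norm_eq_abs]
        rw [this]
        calc |l| * dist y (l⁻¹ • x) < |l| * (ε / |l|) := by
              apply mul_lt_mul_of_pos_left hd habs
          _ = ε := by field_simp
      have := hb _ h1 h2
      rwa [Set.smul_mem_smul_set_iff₀ hl] at this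
    · rintro ⟨x', hx', rfl⟩
      obtain ⟨hx'C, hx'span, ε, hε, hb⟩ := mem_ri.1 hx'
      refine mem_ri.2 ⟨Set.smul_mem_smul_set hx'C, (key _).2 (by rwa [inv_smul_smul₀ hl]),
        |l| * ε, by positivity, fun y hy hd => ?_⟩
      have h1 : l⁻¹ • y ∈ affineSpan ℝ C := (key y).1 hy
      have h2 : dist (l⁻¹ • y) x' < ε := by
        have : dist (l⁻¹ • y) x' = |l|⁻¹ * dist y (l • x') := by
          conv_lhs => rw [show x' = l⁻¹ • (l • x') by rw [inv_smul_smul₀ hl]]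
          rw [dist_smul₀, Real.norm_eq_abs, abs_inv]
        rw [this]
        calc |l|⁻¹ * dist y (l • x') < |l|⁻¹ * (|l| * ε) := by
              apply mul_lt_mul_of_pos_left hd (by positivity)
          _ = ε := by field_simp
      have := hb _ h1 h2
      rw [show y = l • (l⁻¹ • y) by rw [smul_inv_smul₀ hl]]
      exact Set.smul_mem_smul_set this

lemma smul_closure_subset' (l : ℝ) (C : Set X) : l • closure C ⊆ closure (l • C) := by
  rintro - ⟨c, hc, rfl⟩
  have : Continuous (fun x : X => l • x) := continuous_const_smul l
  have h := image_closure_subset_closure_image (f := fun x : X => l • x) this (s := C)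
  have : (fun x : X => l • x) c ∈ closure ((fun x : X => l • x) '' C) := h ⟨c, hc, rfl⟩
  simpa [Set.image_smul] using this

theorem nearlyConvex_smul_add (A B : Set X) (hA : NearlyConvex A) (hB : NearlyConvex B)
    (l m : ℝ) :
    NearlyConvex (l • A + m • B) ∧
    intrinsicInterior ℝ (l • A + m • B) =
      l • intrinsicInterior ℝ A + m • intrinsicInterior ℝ B := by
  obtain ⟨C, hCconv, hCA, hACl⟩ := hA
  obtain ⟨D, hDconv, hDB, hBDl⟩ := hB
  have hSconv : Convex ℝ (l • C + m • D) := (hCconv.smul l).add (hDconv.smul m)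
  have hsub : l • C + m • D ⊆ l • A + m • B :=
    Set.add_subset_add (Set.smul_set_mono hCA) (Set.smul_set_mono hDB)
  have hcl : l • A + m • B ⊆ closure (l • C + m • D) := by
    rintro - ⟨a, ha, b, hb, rfl⟩
    have ha' : a ∈ closure (l • C) := by
      obtain ⟨a', ha', rfl⟩ := ha
      exact smul_closure_subset' l C (Set.smul_mem_smul_set (hACl ha'))
    have hb' : b ∈ closure (m • D) := by
      obtain ⟨b', hb', rfl⟩ := hb
      exact smul_closure_subset' m D (Set.smul_mem_smul_set (hBDl hb'))
    exact map_mem_closure₂ continuous_add ha' hb' (fun u hu v hv => Set.add_mem_add hu hv)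
  refine ⟨⟨l • C + m • D, hSconv, hsub, hcl⟩, ?_⟩
  calc intrinsicInterior ℝ (l • A + m • B) = intrinsicInterior ℝ (l • C + m • D) :=
        ri_sandwich hSconv hsub hcl
    _ = intrinsicInterior ℝ (l • C) + intrinsicInterior ℝ (m • D) :=
        ri_add (hCconv.smul l) (hDconv.smul m)
    _ = l • intrinsicInterior ℝ C + m • intrinsicInterior ℝ D := by
        rw [ri_smul hCconv, ri_smul hDconv]
    _ = l • intrinsicInterior ℝ A + m • intrinsicInterior ℝ B := by
        rw [ri_sandwich hCconv hCA hACl, ri_sandwich hDconv hDB hBDl]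
end
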